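/- arXiv:2308.09703 — 2 statements merged into one kernel-verified Lean document; each statement's English description precedes it below -/
import Mathlib

section
/- Suppose G is a connected chordal graph that contains a clique X, and suppose C is a connected component of G − X. Then the evaporation time of the vertex set C in G with exception set X is equal to the length of the evaporation sequence of the induced subgraph G[X ∪ C] with exception set X. -/
/-- A graph is chordal if it contains no induced cycle of length at least 4. -/
def IsChordal {V : Type*} (G : SimpleGraph V) : Prop :=
  ∀ n : ℕ, 4 ≤ n → IsEmpty (SimpleGraph.cycleGraph n ↪g G)

/-- The neighborhood of `v` inside the induced subgraph of `G` on the vertex set `R`. -/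
def nbhdIn {V : Type*} (G : SimpleGraph V) (R : Set V) (v : V) : Set V :=
  {u | u ∈ R ∧ G.Adj u v}

/-- `v` is simplicial in the induced subgraph of `G` on `R`:
its neighborhood there is a clique. -/
def SimplicialIn {V : Type*} (G : SimpleGraph V) (R : Set V) (v : V) : Prop :=
  G.IsClique (nbhdIn G R v)

/-- The set of vertices remaining after `n` steps of the evaporation process of `G` with
exception set `X`: at each step all simplicial vertices of the current induced subgraph that
are not in `X` are removed. -/
def evapR {V : Type*} (G : SimpleGraph V) (X : Set V) : ℕ → Set V
  | 0 => Set.univ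
  | n + 1 =>
      evapR G X n \ {v | v ∈ evapR G X n ∧ v ∉ X ∧ SimplicialIn G (evapR G X n) v}

/-- The `i`-th set `L_i` of the evaporation sequence (for `i ≥ 1`): the vertices removed at
step `i` of the evaporation process. -/
def evapLayer {V : Type*} (G : SimpleGraph V) (X : Set V) (i : ℕ) : Set V :=
  evapR G X (i - 1) \ evapR G X i

/-- The evaporation time of `G` with exception set `X`: the length `t` of the evaporation
sequence, i.e. the least `t` with `evapR G X t = X`. -/
noncomputable def evapTime {V : Type*} (G : SimpleGraph V) (X : Set V) : ℕ :=
  sInf {t | evapR G X t = X}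

/-- The evaporation time of a vertex subset `S`: the largest index `i` such that
`L_i ∩ S ≠ ∅`. -/
noncomputable def evapTimeOf {V : Type*} (G : SimpleGraph V) (X S : Set V) : ℕ :=
  sSup {i | (evapLayer G X i ∩ S).Nonempty}

/-- `C` is a connected component of the induced subgraph of `G` on `S`:
a maximal subset of `S` inducing a connected subgraph. -/
def IsCompOf {V : Type*} (G : SimpleGraph V) (S C : Set V) : Prop :=
  C.Nonempty ∧ C ⊆ S ∧ (G.induce C).Connected ∧
    ∀ D, C ⊆ D → D ⊆ S → (G.induce D).Connected → D = C

/-- The open neighborhood `N(S)` of a set of vertices. -/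
def setNbhd {V : Type*} (G : SimpleGraph V) (S : Set V) : Set V :=
  {v | v ∉ S ∧ ∃ u ∈ S, G.Adj u v}


/-!
The vertices of `C` have all their neighbours in `X ∪ C`, so at every stage a vertex of `C` is
simplicial in what is left of `G` exactly when it is simplicial in what is left of `G[X ∪ C]`.
Hence the two evaporation processes remove the same vertices of `C` at each step, and both sides
equal the first time at which `C` has disappeared completely.

That this time exists is Dirac's lemma: a finite chordal graph has a simplicial vertex outside
any clique that is not the whole graph. Pick non-adjacent `a, b` and a minimal `a`–`b` separator
`S`; every vertex of `S` has neighbours on both sides, so two non-adjacent vertices of `S` would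
be joined by induced paths through either side, which close up to an induced cycle of length at
least four. Thus `S` is a clique, and induction on each side together with `S` yields a
simplicial vertex on each side; the two are non-adjacent, so one of them avoids the clique.
-/

section Chordal

open SimpleGraph

variable {V : Type*} {G : SimpleGraph V}

def IsInducedPath (G : SimpleGraph V) (f : ℕ → V) (n : ℕ) : Prop :=
  ∀ i j, i < j → j ≤ n → f i ≠ f j ∧ (G.Adj (f i) (f j) ↔ j = i + 1)

def IsInducedCycle (G : SimpleGraph V) (c : ℕ → V) (n : ℕ) : Prop :=
  ∀ i j, i < j → j < n → c i ≠ c j ∧ (G.Adj (c i) (c j) ↔ j = i + 1 ∨ (i = 0 ∧ j + 1 = n))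

lemma SimpleGraph.cycleGraph_adj_iff_of_lt {n : ℕ} {i j : Fin n} (hij : i < j) :
    (cycleGraph n).Adj i j ↔ (j : ℕ) = i + 1 ∨ ((i : ℕ) = 0 ∧ (j : ℕ) + 1 = n) := by
  rw [cycleGraph_adj', Fin.coe_sub_iff_lt.2 hij, Fin.coe_sub_iff_le.2 hij.le]
  have := j.isLt
  omega

def IsInducedCycle.embedding {c : ℕ → V} {n : ℕ} (h : IsInducedCycle G c n) :
    cycleGraph n ↪g G where
  toFun i := c i
  inj' i j hij := by
    by_contra hne
    rcases Fin.lt_or_lt_of_ne hne with hlt | hlt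
    · exact (h _ _ hlt j.isLt).1 hij
    · exact (h _ _ hlt i.isLt).1 hij.symm
  map_rel_iff' {i j} := by
    change G.Adj (c i) (c j) ↔ _
    rcases lt_trichotomy i j with hlt | rfl | hlt
    · simpa [cycleGraph_adj_iff_of_lt hlt] using (h _ _ hlt j.isLt).2
    · simp
    · rw [G.adj_comm, (cycleGraph n).adj_comm, cycleGraph_adj_iff_of_lt hlt]
      exact (h _ _ hlt i.isLt).2

lemma IsChordal.not_isInducedCycle (hG : IsChordal G) {c : ℕ → V} {n : ℕ} (hn : 4 ≤ n) :
    ¬ IsInducedCycle G c n :=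
  fun h => (hG n hn).false h.embedding

lemma IsInducedPath.isInducedCycle_glue {f g : ℕ → V} {n m : ℕ} (hf : IsInducedPath G f n)
    (hg : IsInducedPath G g m) (hn : 0 < n) (hm : 2 ≤ m) (h0 : f 0 = g 0) (hlast : f n = g m)
    (hint : ∀ i j, 0 < i → i < n → 0 < j → j < m → f i ≠ g j ∧ ¬ G.Adj (f i) (g j)) :
    IsInducedCycle G (fun k => if k ≤ n then f k else g (n + m - k)) (n + m) := by
  set c : ℕ → V := fun k => if k ≤ n then f k else g (n + m - k)
  have hcf : ∀ k ≤ n, c k = f k := fun k hk => if_pos hk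
  have hcg : ∀ k, n ≤ k → c k = g (n + m - k) := by
    intro k hk
    by_cases hkn : k = n
    · rw [hkn, hcf n le_rfl, hlast, Nat.add_sub_cancel_left]
    · exact if_neg (by omega)
  intro i j hij hj
  by_cases hjn : j ≤ n
  · rw [hcf i (by omega), hcf j hjn]
    have := hf i j hij hjn
    refine ⟨this.1, this.2.trans ?_⟩
    omega
  rw [hcg j (by omega)]
  by_cases hin : n ≤ i
  · rw [hcg i hin]
    have := hg (n + m - j) (n + m - i) (by omega) (by omega)
    refine ⟨this.1.symm, G.adj_comm _ _ |>.trans (this.2.trans ?_)⟩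
    omega
  rw [hcf i (by omega)]
  rcases Nat.eq_zero_or_pos i with rfl | hi
  · have := hg 0 (n + m - j) (by omega) (by omega)
    rw [h0]
    refine ⟨this.1, this.2.trans ?_⟩
    omega
  · have := hint i (n + m - j) hi (by omega) (by omega) (by omega)
    exact ⟨this.1, iff_of_false this.2 (by omega)⟩

/-- A repeated vertex or a chord of a shortest walk would give a shortcut. -/
lemma SimpleGraph.Reachable.exists_isInducedPath {x y : V} (h : G.Reachable x y) :
    ∃ (f : ℕ → V) (n : ℕ), f 0 = x ∧ f n = y ∧ IsInducedPath G f n := by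
  obtain ⟨w, hw⟩ := h.exists_walk_length_eq_dist
  refine ⟨w.getVert, w.length, w.getVert_zero, w.getVert_length, fun i j hij hj => ⟨?_, ?_⟩⟩
  · intro heq
    have := dist_le ((w.take i).append ((w.drop j).copy heq.symm rfl))
    simp only [Walk.length_append, Walk.take_length, Walk.length_copy, Walk.drop_length] at this
    omega
  · refine ⟨fun hadj => ?_, fun hji => hji ▸ w.adj_getVert_succ (by omega)⟩
    by_contra hne
    have := dist_le ((w.take i).append (.cons hadj (w.drop j)))
    simp only [Walk.length_append, Walk.take_length, Walk.length_cons, Walk.drop_length] at this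
    omega

/-- `G.induce W` kept on the whole vertex type, so that reachability inside different vertex
sets can be compared directly. -/
def SimpleGraph.restrict (G : SimpleGraph V) (W : Set V) : SimpleGraph V where
  Adj u v := u ∈ W ∧ v ∈ W ∧ G.Adj u v
  symm := ⟨fun _ _ h => ⟨h.2.1, h.1, h.2.2.symm⟩⟩

@[simp]
lemma SimpleGraph.restrict_adj {W : Set V} {u v : V} :
    (G.restrict W).Adj u v ↔ u ∈ W ∧ v ∈ W ∧ G.Adj u v := Iff.rfl

lemma SimpleGraph.restrict_mono {W W' : Set V} (h : W ⊆ W') : G.restrict W ≤ G.restrict W' :=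
  fun _ _ huv => ⟨h huv.1, h huv.2.1, huv.2.2⟩

section Restrict

variable {W : Set V} {a b c s : V}

lemma mem_of_reachable_restrict (ha : a ∈ W) (h : (G.restrict W).Reachable a b) : b ∈ W := by
  obtain ⟨p⟩ := h
  induction p with
  | nil => exact ha
  | cons h _ ih => exact ih h.2.1

lemma reachable_restrict_reachableSet (h : (G.restrict W).Reachable a b) :
    (G.restrict {v | (G.restrict W).Reachable a v}).Reachable a b := by
  rw [reachable_iff_reflTransGen] at h ⊢
  induction h with
  | refl => rfl
  | @tail v w hav hvw ih =>
    exact ih.tail ⟨(reachable_iff_reflTransGen _ _).2 hav,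
      (reachable_iff_reflTransGen _ _).2 (hav.tail hvw), hvw.2.2⟩

lemma reachable_restrict_or_exists_adj (hc : c ∈ W)
    (h : (G.restrict (insert s W)).Reachable c b) :
    (G.restrict W).Reachable c b ∨ ∃ u, (G.restrict W).Reachable c u ∧ G.Adj u s := by
  obtain ⟨p⟩ := h
  induction p with
  | nil => exact .inl .rfl
  | @cons c v b hcv p ih =>
    by_cases hvs : v = s
    · exact .inr ⟨c, .rfl, hvs ▸ hcv.2.2⟩
    have hv : v ∈ W := hcv.2.1.resolve_left hvs
    have hstep : (G.restrict W).Reachable c v := Adj.reachable ⟨hc, hv, hcv.2.2⟩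
    rcases ih hv with h | ⟨u, hu, hus⟩
    · exact .inl (hstep.trans h)
    · exact .inr ⟨u, hstep.trans hu, hus⟩

end Restrict

lemma IsInducedPath.mem_of_restrict {W : Set V} {f : ℕ → V} {n : ℕ}
    (h : IsInducedPath (G.restrict W) f n) (hn : 0 < n) {i : ℕ} (hi : i ≤ n) : f i ∈ W := by
  rcases hi.lt_or_eq with hi | rfl
  · exact ((h i (i + 1) (by omega) hi).2.2 rfl).1
  · exact ((h (i - 1) i (by omega) le_rfl).2.2 (by omega)).2.1

lemma IsInducedPath.of_restrict {W : Set V} {f : ℕ → V} {n : ℕ}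
    (h : IsInducedPath (G.restrict W) f n) (hn : 0 < n) : IsInducedPath G f n := by
  intro i j hij hj
  refine ⟨(h i j hij hj).1, Iff.trans ?_ (h i j hij hj).2⟩
  simp [h.mem_of_restrict hn (hij.le.trans hj), h.mem_of_restrict hn hj]

lemma exists_isInducedPath_through_component {W : Set V} {c p q : V} (hpq : p ≠ q)
    (hnadj : ¬ G.Adj p q) (hp : ∃ u, (G.restrict W).Reachable c u ∧ G.Adj u p)
    (hq : ∃ u, (G.restrict W).Reachable c u ∧ G.Adj u q) :
    ∃ (f : ℕ → V) (n : ℕ), 2 ≤ n ∧ f 0 = p ∧ f n = q ∧ IsInducedPath G f n ∧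
      ∀ i, 0 < i → i < n → (G.restrict W).Reachable c (f i) := by
  set A := {v | (G.restrict W).Reachable c v}
  have hlift : ∀ {v}, (G.restrict W).Reachable c v →
      (G.restrict (insert p (insert q A))).Reachable c v := fun h =>
    (reachable_restrict_reachableSet h).mono
      (restrict_mono (Set.subset_insert _ _ |>.trans (Set.subset_insert _ _)))
  obtain ⟨u, hcu, hup⟩ := hp
  obtain ⟨w, hcw, hwq⟩ := hq
  have hpq' : (G.restrict (insert p (insert q A))).Reachable p q := by
    have hpu : (G.restrict (insert p (insert q A))).Adj p u := by simp [A, hcu, hup.symm]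
    have hwq' : (G.restrict (insert p (insert q A))).Adj w q := by simp [A, hcw, hwq]
    exact hpu.reachable.trans ((hlift hcu).symm.trans ((hlift hcw).trans hwq'.reachable))
  obtain ⟨f, n, hf0, hfn, hf⟩ := hpq'.exists_isInducedPath
  have hn : 0 < n := Nat.pos_of_ne_zero (by rintro rfl; exact hpq (hf0.symm.trans hfn))
  have hf' := hf.of_restrict hn
  refine ⟨f, n, ?_, hf0, hfn, hf', fun i hi hin => ?_⟩
  · by_contra h
    exact hnadj (hf0 ▸ hfn ▸ ((hf' 0 n hn le_rfl).2.2 (by omega)))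
  · have hfi := hf.mem_of_restrict hn hin.le
    have hfip : f i ≠ p := hf0 ▸ ((hf' 0 i hi hin.le).1.symm)
    have hfiq : f i ≠ q := hfn ▸ (hf' i n hin le_rfl).1
    simpa [hfip, hfiq, A] using hfi

def IsSeparator (G : SimpleGraph V) (R S : Set V) (a b : V) : Prop :=
  S ⊆ R ∧ a ∈ R \ S ∧ b ∈ R \ S ∧ ¬ (G.restrict (R \ S)).Reachable a b

section Separator

variable {R S : Set V} {a b : V}

lemma IsSeparator.symm (h : IsSeparator G R S a b) : IsSeparator G R S b a :=
  ⟨h.1, h.2.2.1, h.2.1, fun hba => h.2.2.2 hba.symm⟩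

lemma exists_minimal_isSeparator [Finite V] (ha : a ∈ R) (hb : b ∈ R) (hab : a ≠ b)
    (hnadj : ¬ G.Adj a b) : ∃ S, Minimal (IsSeparator G R · a b) S := by
  have hsep : IsSeparator G R (R \ {a, b}) a b := by
    refine ⟨Set.sdiff_subset, ⟨ha, by simp⟩, ⟨hb, by simp⟩, fun ⟨p⟩ => ?_⟩
    cases p with
    | nil => exact hab rfl
    | @cons _ v _ hav _ =>
      have hv : v = a ∨ v = b := or_iff_not_imp_left.2 (by simpa [hav.2.1.1] using hav.2.1.2)
      rcases hv with rfl | rfl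
      · exact hav.2.2.ne rfl
      · exact hnadj hav.2.2
  obtain ⟨S, -, hS⟩ := exists_minimal_le_of_wellFoundedLT (IsSeparator G R · a b) _ hsep
  exact ⟨S, hS⟩

lemma exists_adj_of_minimal_isSeparator (hS : Minimal (IsSeparator G R · a b) S) {s : V}
    (hs : s ∈ S) : ∃ u, (G.restrict (R \ S)).Reachable a u ∧ G.Adj u s := by
  obtain ⟨hSR, ha, hb, hnab⟩ := hS.prop
  have hreach : (G.restrict (insert s (R \ S))).Reachable a b := by
    by_contra hnr
    have hsep : IsSeparator G R (S \ {s}) a b := by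
      refine ⟨Set.sdiff_subset.trans hSR, ⟨ha.1, fun h => ha.2 h.1⟩, ⟨hb.1, fun h => hb.2 h.1⟩, ?_⟩
      have hR : R \ (S \ {s}) = insert s (R \ S) := by
        ext v
        by_cases hvs : v = s <;> simp [hvs, hSR hs]
      rwa [hR]
    exact (Set.sdiff_singleton_ssubset.2 hs).2 (hS.2 hsep Set.sdiff_subset)
  exact (reachable_restrict_or_exists_adj ha hreach).resolve_left hnab

lemma IsChordal.isClique_of_minimal_isSeparator (hG : IsChordal G)
    (hS : Minimal (IsSeparator G R · a b) S) : G.IsClique S := by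
  intro p hp q hq hpq
  by_contra hnadj
  obtain ⟨-, ha, hb, hnab⟩ := hS.prop
  have hS' : Minimal (IsSeparator G R · b a) S := ⟨hS.prop.symm, fun T hT => hS.2 hT.symm⟩
  obtain ⟨f, n, hn, hf0, hfn, hf, hfa⟩ := exists_isInducedPath_through_component hpq hnadj
    (exists_adj_of_minimal_isSeparator hS hp) (exists_adj_of_minimal_isSeparator hS hq)
  obtain ⟨g, m, hm, hg0, hgm, hg, hgb⟩ := exists_isInducedPath_through_component hpq hnadj
    (exists_adj_of_minimal_isSeparator hS' hp) (exists_adj_of_minimal_isSeparator hS' hq)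
  refine hG.not_isInducedCycle (by omega) (hf.isInducedCycle_glue hg (by omega) hm
    (hf0.trans hg0.symm) (hfn.trans hgm.symm) fun i j hi hin hj hjm => ⟨?_, ?_⟩)
  · intro heq
    exact hnab ((hfa i hi hin).trans (heq ▸ hgb j hj hjm).symm)
  · intro hadj
    have hstep : (G.restrict (R \ S)).Adj (f i) (g j) :=
      ⟨mem_of_reachable_restrict ha (hfa i hi hin), mem_of_reachable_restrict hb (hgb j hj hjm),
        hadj⟩
    exact hnab ((hfa i hi hin).trans (hstep.reachable.trans (hgb j hj hjm).symm))

/-- The `R`-neighbours of a vertex in the component `A` of `c` in `R \ S` lie in `A ∪ S`. -/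
lemma SimplicialIn.of_union_component {c v : V} (hc : c ∈ R \ S)
    (hv : (G.restrict (R \ S)).Reachable c v)
    (h : SimplicialIn G ({w | (G.restrict (R \ S)).Reachable c w} ∪ S) v) :
    SimplicialIn G R v := by
  refine IsClique.subset ?_ h
  rintro u ⟨huR, huv⟩
  refine ⟨?_, huv⟩
  by_cases huS : u ∈ S
  · exact .inr huS
  · exact .inl (hv.trans (Adj.reachable ⟨mem_of_reachable_restrict hc hv, ⟨huR, huS⟩, huv.symm⟩))

end Separator

theorem IsChordal.exists_simplicialIn [Finite V] (hG : IsChordal G) {R X : Set V}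
    (hX : G.IsClique X) (hXR : X ⊂ R) : ∃ v ∈ R \ X, SimplicialIn G R v := by
  induction R using WellFoundedLT.induction generalizing X with
  | _ R ih =>
  by_cases hR : G.IsClique R
  · obtain ⟨v, hvR, hvX⟩ := Set.exists_of_ssubset hXR
    exact ⟨v, ⟨hvR, hvX⟩, IsClique.subset (fun u hu => hu.1) hR⟩
  obtain ⟨a, ha, b, hb, hab, hnadj⟩ : ∃ a ∈ R, ∃ b ∈ R, a ≠ b ∧ ¬ G.Adj a b := by
    simpa [SimpleGraph.IsClique, Set.Pairwise] using hR
  obtain ⟨S, hS⟩ := exists_minimal_isSeparator ha hb hab hnadj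
  have hSc := hG.isClique_of_minimal_isSeparator hS
  have side : ∀ {c d}, IsSeparator G R S c d →
      ∃ v, (G.restrict (R \ S)).Reachable c v ∧ SimplicialIn G R v := by
    intro c d ⟨hSR, hc, hd, hncd⟩
    set A := {v | (G.restrict (R \ S)).Reachable c v}
    have hASR : A ∪ S ⊂ R := by
      refine Set.ssubset_iff_of_subset ?_ |>.2 ⟨d, hd.1, ?_⟩
      · exact Set.union_subset (fun v hv => (mem_of_reachable_restrict hc hv).1) hSR
      · rintro (h | h)
        exacts [hncd h, hd.2 h]
    have hSA : S ⊂ A ∪ S :=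
      Set.ssubset_iff_of_subset Set.subset_union_right |>.2 ⟨c, .inl .rfl, hc.2⟩
    obtain ⟨v, ⟨hvA | hvS, hvS'⟩, hv⟩ := ih _ hASR hSc hSA
    · exact ⟨v, hvA, hv.of_union_component hc hvA⟩
    · exact absurd hvS hvS'
  obtain ⟨va, hava, hva⟩ := side hS.prop
  obtain ⟨vb, hbvb, hvb⟩ := side hS.prop.symm
  obtain ⟨-, ha, hb, hnab⟩ := hS.prop
  have hvaR := mem_of_reachable_restrict ha hava
  have hvbR := mem_of_reachable_restrict hb hbvb
  by_contra! hno
  have hvaX : va ∈ X := by_contra fun h => hno va ⟨hvaR.1, h⟩ hva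
  have hvbX : vb ∈ X := by_contra fun h => hno vb ⟨hvbR.1, h⟩ hvb
  have hne : va ≠ vb := fun h => hnab (hava.trans (h ▸ hbvb.symm))
  have hstep : (G.restrict (R \ S)).Adj va vb := ⟨hvaR, hvbR, hX hvaX hvbX hne⟩
  exact hnab (hava.trans (hstep.reachable.trans hbvb.symm))

section Evaporation

variable {X : Set V}

lemma subset_evapR (n : ℕ) : X ⊆ evapR G X n := by
  induction n with
  | zero => exact Set.subset_univ X
  | succ n ih => exact fun v hv => ⟨ih hv, fun h => h.2.1 hv⟩

lemma evapR_antitone : Antitone (evapR G X) :=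
  antitone_nat_of_succ_le fun _ => Set.sdiff_subset

lemma IsChordal.exists_evapR_eq [Finite V] (hG : IsChordal G) (hX : G.IsClique X) :
    ∃ t, evapR G X t = X := by
  obtain ⟨n, hn⟩ := WellFoundedLT.antitone_chain_condition (evapR_antitone (G := G) (X := X))
  refine ⟨n, (subset_evapR n).antisymm' (by_contra fun hne => ?_)⟩
  obtain ⟨v, hv, hsimp⟩ := hG.exists_simplicialIn hX ((subset_evapR n).ssubset_of_not_subset hne)
  have hv' : v ∈ evapR G X (n + 1) := hn (n + 1) n.le_succ ▸ hv.1
  exact hv'.2 ⟨hv.1, hv.2, hsimp⟩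

lemma evapTimeOf_eq_sInf {S : Set V} (hS : S.Nonempty) (ht : ∃ t, evapR G X t ∩ S = ∅) :
    evapTimeOf G X S = sInf {t | evapR G X t ∩ S = ∅} := by
  set t := sInf {t | evapR G X t ∩ S = ∅}
  have htS : evapR G X t ∩ S = ∅ := Nat.sInf_mem ht
  have ht0 : t ≠ 0 := by
    intro h
    rw [h, evapR, Set.univ_inter] at htS
    exact hS.ne_empty htS
  have hprev : (evapR G X (t - 1) ∩ S).Nonempty :=
    Set.nonempty_iff_ne_empty.2 fun h => by
      have : t ≤ t - 1 := Nat.sInf_le h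
      omega
  have hmem : t ∈ {i | (evapLayer G X i ∩ S).Nonempty} := by
    obtain ⟨v, hv, hvS⟩ := hprev
    exact ⟨v, ⟨hv, fun hvt => htS.subset ⟨hvt, hvS⟩⟩, hvS⟩
  have hub : ∀ i ∈ {i | (evapLayer G X i ∩ S).Nonempty}, i ≤ t := by
    rintro i ⟨v, hv, hvS⟩
    by_contra! hti
    exact htS.subset ⟨evapR_antitone (by omega : t ≤ i - 1) hv.1, hvS⟩
  exact le_antisymm (csSup_le ⟨t, hmem⟩ hub) (le_csSup ⟨t, hub⟩ hmem)

lemma simplicialIn_induce_iff {U R : Set V} {v : U} (hv : ∀ u, G.Adj u v → u ∈ U) :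
    SimplicialIn (G.induce U) (Subtype.val ⁻¹' R) v ↔ SimplicialIn G R v := by
  have hnbhd : nbhdIn (G.induce U) (Subtype.val ⁻¹' R) v = Subtype.val ⁻¹' nbhdIn G R v := rfl
  rw [SimplicialIn, hnbhd, isClique_induce_iff, Subtype.image_preimage_coe,
    Set.inter_eq_right.2 fun u hu => hv u hu.2, SimplicialIn]

lemma evapR_induce {U : Set V} (hU : ∀ v ∈ U, v ∉ X → ∀ u, G.Adj u v → u ∈ U) (n : ℕ) :
    evapR (G.induce U) (Subtype.val ⁻¹' X) n = Subtype.val ⁻¹' evapR G X n := by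
  induction n with
  | zero => rfl
  | succ n ih =>
    ext v
    simp only [evapR, ih, Set.mem_sdiff, Set.mem_preimage, Set.mem_ofPred_eq]
    by_cases hvX : (v : V) ∈ X
    · simp [hvX]
    · simp [hvX, simplicialIn_induce_iff (hU v v.2 hvX)]

end Evaporation

lemma IsCompOf.mem_of_adj {S C : Set V} (hC : IsCompOf G S C) {u v : V} (hv : v ∈ C)
    (huv : G.Adj u v) (hu : u ∈ S) : u ∈ C := by
  have hconn : (G.induce (C ∪ {u})).Connected :=
    connected_induce_union hC.2.2.1.preconnected Preconnected.of_subsingleton hv rfl huv.symm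
  rw [← hC.2.2.2 _ Set.subset_union_left (Set.union_subset hC.2.1 (by simpa using hu)) hconn]
  exact .inr rfl

end Chordal

theorem evapTimeOf_component_eq_general {V : Type*} [Fintype V] (G : SimpleGraph V) (X : Set V)
    (hch : IsChordal G) (hX : G.IsClique X)
    (C : Set V) (hC : IsCompOf G Xᶜ C) :
    evapTimeOf G X C =
      evapTime (G.induce (X ∪ C)) (Subtype.val ⁻¹' X : Set ↥(X ∪ C)) := by
  have hclosed : ∀ v ∈ X ∪ C, v ∉ X → ∀ u, G.Adj u v → u ∈ X ∪ C := by
    rintro v (hvX | hvC) hvX' u huv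
    · exact absurd hvX hvX'
    · by_cases huX : u ∈ X
      exacts [.inl huX, .inr (hC.mem_of_adj hvC huv huX)]
  have hgone : ∀ t, Subtype.val ⁻¹' evapR G X t = (Subtype.val ⁻¹' X : Set ↥(X ∪ C)) ↔
      evapR G X t ∩ C = ∅ := by
    intro t
    have hXt := subset_evapR (G := G) (X := X) t
    have hCX : ∀ v ∈ C, v ∉ X := hC.2.1
    rw [Subtype.preimage_coe_eq_preimage_coe_iff, Set.ext_iff, Set.eq_empty_iff_forall_notMem]
    simp only [Set.mem_inter_iff, Set.mem_union]
    exact forall_congr' fun v => by have := @hXt v; have := hCX v; tauto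
  obtain ⟨t, ht⟩ := hch.exists_evapR_eq hX
  rw [evapTimeOf_eq_sInf hC.1 ⟨t, ?_⟩, evapTime]
  · simp_rw [evapR_induce hclosed, hgone]
  · rw [ht, Set.eq_empty_iff_forall_notMem]
    exact fun v hv => hC.2.1 hv.2 hv.1

/-- Suppose `G` is a connected chordal graph containing a clique `X`, and
`C` is a connected component of `G − X`. Then the evaporation time of the vertex set `C` in
`G` with exception set `X` equals the length of the evaporation sequence of the induced
subgraph `G[X ∪ C]` with exception set `X`. -/
theorem evapTimeOf_component_eq {V : Type*} [Fintype V] (G : SimpleGraph V) (X : Set V)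
    (hG : G.Connected) (hch : IsChordal G) (hX : G.IsClique X)
    (C : Set V) (hC : IsCompOf G Xᶜ C) :
    evapTimeOf G X C =
      evapTime (G.induce (X ∪ C)) (Subtype.val ⁻¹' X : Set ↥(X ∪ C)) :=
  evapTimeOf_component_eq_general G X hch hX C hC
end

section
/- Let G be a split graph whose questioning set Q satisfies |Q| ≤ 1, with always-clique set C and always-independent set I. Then every vertex in C has a neighbor in I, and every vertex in I has a non-neighbor in C. -/
/-- A set of vertices is independent if no two of its members are adjacent. -/
def IsIndep {V : Type*} (G : SimpleGraph V) (s : Set V) : Prop :=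
  s.Pairwise fun u v => ¬ G.Adj u v

/-- `(C, I)` is a split partition of `G`: `C` and `I` are disjoint, cover all vertices,
`C` is a clique and `I` is an independent set (empty parts are allowed). -/
def IsSplitPartition {V : Type*} (G : SimpleGraph V) (C I : Set V) : Prop :=
  Disjoint C I ∧ C ∪ I = Set.univ ∧ G.IsClique C ∧ IsIndep G I

/-- A split graph: the vertex set can be partitioned into a clique and an independent set. -/
def IsSplit {V : Type*} (G : SimpleGraph V) : Prop :=
  ∃ C I : Set V, IsSplitPartition G C I

/-- The always-clique set: vertices belonging to the clique part of every split partition. -/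
def alwaysClique {V : Type*} (G : SimpleGraph V) : Set V :=
  {v | ∀ C I : Set V, IsSplitPartition G C I → v ∈ C}

/-- The always-independent set: vertices belonging to the independent part of every
split partition. -/
def alwaysIndep {V : Type*} (G : SimpleGraph V) : Set V :=
  {v | ∀ C I : Set V, IsSplitPartition G C I → v ∈ I}

/-- The questioning set: vertices placed in the clique part by some split partition and
in the independent part by some (other) split partition. -/
def questioning {V : Type*} (G : SimpleGraph V) : Set V :=
  {v | (∃ C I : Set V, IsSplitPartition G C I ∧ v ∈ C) ∧
       (∃ C I : Set V, IsSplitPartition G C I ∧ v ∈ I)}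

/-!
A vertex of the clique part with no neighbour in the independent part can be moved across, so a
vertex of the always-clique set has a neighbour in the independent part of every split partition.
It remains to find a split partition whose independent part avoids the questioning set: if that set
is a single vertex `q`, take a partition putting `q` in the clique part. The second half is the
first half for the complement graph, which swaps the two parts of every split partition.
-/

section

variable {V : Type*} {G : SimpleGraph V} {C I : Set V} {v : V}

namespace IsSplitPartition

lemma mem_or_mem (h : IsSplitPartition G C I) (v : V) : v ∈ C ∨ v ∈ I :=
  (h.2.1 ▸ Set.mem_univ v : v ∈ C ∪ I)

lemma compl (h : IsSplitPartition G C I) : IsSplitPartition Gᶜ I C :=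
  ⟨h.1.symm, Set.union_comm C I ▸ h.2.1,
    (G.isClique_compl).mpr h.2.2.2, (G.isIndepSet_compl).mpr h.2.2.1⟩

lemma diff_singleton_insert (h : IsSplitPartition G C I) (hv : v ∈ C)
    (hnadj : ∀ u ∈ I, ¬ G.Adj v u) : IsSplitPartition G (C \ {v}) (insert v I) := by
  obtain ⟨hdisj, hcover, hclique, hindep⟩ := h
  refine ⟨?_, ?_, hclique.subset Set.sdiff_subset, ?_⟩
  · rw [Set.disjoint_insert_right]
    exact ⟨fun hv' => hv'.2 rfl, hdisj.mono_left Set.sdiff_subset⟩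
  · rw [Set.union_insert, ← Set.insert_union, Set.insert_sdiff_singleton,
      Set.insert_eq_of_mem hv, hcover]
  · exact hindep.insert fun u hu _ => ⟨hnadj u hu, fun huv => hnadj u hu huv.symm⟩

lemma exists_adj_of_mem_alwaysClique (h : IsSplitPartition G C I) (hv : v ∈ alwaysClique G) :
    ∃ u ∈ I, G.Adj v u := by
  by_contra! hnadj
  exact (hv _ _ (h.diff_singleton_insert (hv C I h) hnadj)).2 rfl

lemma mem_alwaysIndep_of_notMem_questioning (h : IsSplitPartition G C I) (hv : v ∈ I)
    (hq : v ∉ questioning G) : v ∈ alwaysIndep G := fun C' I' h' =>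
  (h'.mem_or_mem v).resolve_left fun hvC' => hq ⟨⟨C', I', h', hvC'⟩, ⟨C, I, h, hv⟩⟩

end IsSplitPartition

lemma isSplitPartition_compl_iff : IsSplitPartition Gᶜ I C ↔ IsSplitPartition G C I :=
  ⟨fun h => compl_compl G ▸ h.compl, IsSplitPartition.compl⟩

lemma alwaysClique_compl : alwaysClique Gᶜ = alwaysIndep G := by
  ext v
  exact ⟨fun h C I hCI => h I C hCI.compl,
    fun h I C hIC => h C I (isSplitPartition_compl_iff.mp hIC)⟩

lemma alwaysIndep_compl : alwaysIndep Gᶜ = alwaysClique G := by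
  rw [← alwaysClique_compl, compl_compl]

lemma questioning_compl : questioning Gᶜ = questioning G := by
  ext v
  constructor
  · rintro ⟨⟨C, I, h, hvC⟩, ⟨C', I', h', hvI'⟩⟩
    exact ⟨⟨I', C', isSplitPartition_compl_iff.mp h', hvI'⟩,
      ⟨I, C, isSplitPartition_compl_iff.mp h, hvC⟩⟩
  · rintro ⟨⟨C, I, h, hvC⟩, ⟨C', I', h', hvI'⟩⟩
    exact ⟨⟨I', C', h'.compl, hvI'⟩, ⟨I, C, h.compl, hvC⟩⟩

lemma IsSplit.compl (hG : IsSplit G) : IsSplit Gᶜ :=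
  let ⟨C, I, h⟩ := hG
  ⟨I, C, h.compl⟩

lemma exists_isSplitPartition_subset_alwaysIndep (hG : IsSplit G)
    (hQ : (questioning G).Subsingleton) :
    ∃ C I, IsSplitPartition G C I ∧ I ⊆ alwaysIndep G := by
  by_cases hne : (questioning G).Nonempty
  · obtain ⟨q, hq⟩ := hne
    obtain ⟨C, I, h, hqC⟩ := hq.1
    refine ⟨C, I, h, fun u hu => h.mem_alwaysIndep_of_notMem_questioning hu fun huQ => ?_⟩
    exact h.1.ne_of_mem hqC hu (hQ hq huQ)
  · obtain ⟨C, I, h⟩ := hG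
    exact ⟨C, I, h, fun u hu => h.mem_alwaysIndep_of_notMem_questioning hu
      fun huQ => hne ⟨u, huQ⟩⟩

lemma exists_mem_alwaysIndep_adj (hG : IsSplit G) (hQ : (questioning G).Subsingleton)
    (hv : v ∈ alwaysClique G) : ∃ u ∈ alwaysIndep G, G.Adj v u := by
  obtain ⟨C, I, h, hI⟩ := exists_isSplitPartition_subset_alwaysIndep hG hQ
  obtain ⟨u, hu, hvu⟩ := h.exists_adj_of_mem_alwaysClique hv
  exact ⟨u, hI hu, hvu⟩

end

/-- Let `G` be a split graph whose questioning set has at most one element.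
Then every vertex of the always-clique set `C` has a neighbor in the always-independent set
`I`, and every vertex of `I` has a non-neighbor in `C`. -/
theorem neighbor_exists_of_questioning_small {V : Type*} [Fintype V] (G : SimpleGraph V)
    (hG : IsSplit G) (hQ : (questioning G).ncard ≤ 1) :
    (∀ v ∈ alwaysClique G, ∃ u ∈ alwaysIndep G, G.Adj v u) ∧
    (∀ v ∈ alwaysIndep G, ∃ u ∈ alwaysClique G, ¬ G.Adj v u) := by
  have hQ : (questioning G).Subsingleton := Set.ncard_le_one_iff_subsingleton.mp hQ
  refine ⟨fun v hv => exists_mem_alwaysIndep_adj hG hQ hv, fun v hv => ?_⟩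
  rw [← alwaysClique_compl] at hv
  rw [← questioning_compl] at hQ
  obtain ⟨u, hu, hvu⟩ := exists_mem_alwaysIndep_adj hG.compl hQ hv
  exact ⟨u, alwaysIndep_compl ▸ hu, ((G.compl_adj v u).mp hvu).2⟩
end
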